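/- Let Γg⁻¹Γ·Γh⁻¹Γ = ⊔_{k=1}^K Γz_kΓ be the decomposition of the product set into double cosets, m_k := #{(i,j) ∈ I×J : g_i h_j Γ = z_kΓ'} where z_kΓ' ranges over a fixed coset z_kΓ in Γz_kΓ, and d_k := the number of left Γ-cosets in Γz_kΓ. Then Σ_{k=1}^K m_k d_k = |I|·|J|. -/

import Mathlib

/-!
Sort the pairs `(i, j)` by the left coset `gᵢhⱼΓ`. These cosets are exactly the left cosets
contained in `Γg⁻¹Γh⁻¹Γ`, namely the `d_k` cosets `γz_kΓ` for each `k`. The number of pairs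
over `cΓ` equals `#{i | gᵢ⁻¹c ∈ Γh⁻¹Γ}`, and since left multiplication by `γ ∈ Γ` permutes the
cosets `gᵢΓ`, this number depends only on the `Γ`-orbit of `cΓ`; over `γz_kΓ` it is therefore `m_k`.
-/

open Pointwise Set Function

section Counting

variable {α β κ : Type*} [Finite α]

theorem Nat.card_preimage_eq_mul_card (f : α → β) {S : Set β} (hS : S ⊆ range f) {m : ℕ}
    (hfib : ∀ b ∈ S, Nat.card {a | f a = b} = m) :
    Nat.card (f ⁻¹' S) = m * Nat.card S := by
  have hfin : S.Finite := (finite_range f).subset hS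
  calc Nat.card (f ⁻¹' S)
      = ∑ b ∈ hfin.toFinset, Nat.card {a // f a = b} := by
        rw [← Finset.card_preimage_eq_sum_card_image_eq fun _ _ => toFinite _, hfin.coe_toFinset]
    _ = ∑ _b ∈ hfin.toFinset, m :=
        Finset.sum_congr rfl fun b hb => hfib b (hfin.mem_toFinset.mp hb)
    _ = m * Nat.card S := by
        rw [Finset.sum_const, smul_eq_mul, mul_comm, Nat.card_coe_set_eq,
          ncard_eq_toFinset_card S hfin]

theorem Nat.sum_card_preimage_eq_card [Fintype κ] (f : α → β) {S : κ → Set β}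
    (hdisj : Pairwise (Disjoint on S)) (hcover : range f ⊆ ⋃ k, S k) :
    ∑ k, Nat.card (f ⁻¹' S k) = Nat.card α := by
  have huniv : ⋃ k, f ⁻¹' S k = univ := by rwa [← preimage_iUnion, preimage_eq_univ_iff]
  rw [← ncard_univ, ← huniv, ncard_iUnion_of_finite (fun _ => toFinite _)
    (fun _ _ h => (hdisj h).preimage f), finsum_eq_sum_of_fintype]
  rfl

theorem Nat.sum_card_fiber_mul_card_eq_card [Fintype κ] (f : α → β) {S : κ → Set β} (c : κ → β)
    (hdisj : Pairwise (Disjoint on S)) (hcover : range f ⊆ ⋃ k, S k) (hS : ∀ k, S k ⊆ range f)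
    (hfib : ∀ k, ∀ b ∈ S k, Nat.card {a | f a = b} = Nat.card {a | f a = c k}) :
    ∑ k, Nat.card {a | f a = c k} * Nat.card (S k) = Nat.card α := by
  rw [← Nat.sum_card_preimage_eq_card f hdisj hcover]
  exact Finset.sum_congr rfl fun k _ => (Nat.card_preimage_eq_mul_card f (hS k) (hfib k)).symm

end Counting

section Cosets

variable {G : Type*} [Group G] {Γ : Subgroup G}

theorem mul_leftCoset_eq_iff {x y c : G} :
    (x * y) • (Γ : Set G) = c • (Γ : Set G) ↔ x⁻¹ * c ∈ y • (Γ : Set G) := by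
  rw [leftCoset_eq_iff, mem_leftCoset_iff, mul_inv_rev, mul_assoc, SetLike.mem_coe]

theorem leftCoset_mem_range_iff {x z : G} :
    x • (Γ : Set G) ∈ range (fun γ : Γ => ((γ : G) * z) • (Γ : Set G)) ↔
      ∃ a ∈ Γ, ∃ b ∈ Γ, x = a * z * b := by
  constructor
  · rintro ⟨γ, hγ⟩
    exact ⟨γ, γ.2, _, (leftCoset_eq_iff Γ).mp hγ, by group⟩
  · rintro ⟨a, ha, b, hb, rfl⟩
    exact ⟨⟨a, ha⟩, (leftCoset_eq_iff Γ).mpr (by simpa [mul_assoc] using hb)⟩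

theorem mul_mem_doubleCoset {γ x z : G} (hγ : γ ∈ Γ) (hx : ∃ a ∈ Γ, ∃ b ∈ Γ, x = a * z * b) :
    ∃ a ∈ Γ, ∃ b ∈ Γ, γ * x = a * z * b := by
  obtain ⟨a, ha, b, hb, rfl⟩ := hx
  exact ⟨γ * a, Γ.mul_mem hγ ha, b, hb, by group⟩

theorem mul_mem_doubleCoset_mul_doubleCoset {x y u v : G}
    (hx : ∃ a ∈ Γ, ∃ b ∈ Γ, x = a * u * b) (hy : ∃ a ∈ Γ, ∃ b ∈ Γ, y = a * v * b) :
    ∃ a ∈ Γ, ∃ b ∈ Γ, ∃ c ∈ Γ, x * y = a * u * b * v * c := by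
  obtain ⟨a, ha, b, hb, rfl⟩ := hx
  obtain ⟨a', ha', b', hb', rfl⟩ := hy
  exact ⟨a, ha, b * a', Γ.mul_mem hb ha', b', hb', by group⟩

end Cosets

structure IsLeftCosetDecomposition {G I : Type*} [Group G] (Γ : Subgroup G) (D : Set G)
    (gs : I → G) : Prop where
  eq_iUnion : D = ⋃ i, gs i • (Γ : Set G)
  pairwise_disjoint : Pairwise fun i i' => Disjoint (gs i • (Γ : Set G)) (gs i' • (Γ : Set G))

namespace IsLeftCosetDecomposition

variable {G I J : Type*} [Group G] {Γ : Subgroup G} {D E : Set G} {gs : I → G} {hs : J → G}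

theorem exists_inv_mul_mem (hD : IsLeftCosetDecomposition Γ D gs) {x : G} (hx : x ∈ D) :
    ∃ i, (gs i)⁻¹ * x ∈ Γ := by
  rw [hD.eq_iUnion] at hx
  obtain ⟨i, hi⟩ := mem_iUnion.mp hx
  exact ⟨i, (mem_leftCoset_iff _).mp hi⟩

theorem eq_of_mem (hD : IsLeftCosetDecomposition Γ D gs) {x : G} {i i' : I}
    (hi : x ∈ gs i • (Γ : Set G)) (hi' : x ∈ gs i' • (Γ : Set G)) : i = i' := by
  by_contra hne
  exact disjoint_left.mp (hD.pairwise_disjoint hne) hi hi'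

theorem mem (hD : IsLeftCosetDecomposition Γ D gs) (i : I) : gs i ∈ D :=
  hD.eq_iUnion ▸ mem_iUnion.mpr ⟨i, mem_own_leftCoset _ _⟩

theorem card_setOf_mul_leftCoset_eq (hE : IsLeftCosetDecomposition Γ E hs) (gs : I → G)
    (c : G) :
    Nat.card {p : I × J | (gs p.1 * hs p.2) • (Γ : Set G) = c • (Γ : Set G)} =
      Nat.card {i | (gs i)⁻¹ * c ∈ E} := by
  simp only [Nat.card_coe_set_eq, mul_leftCoset_eq_iff]
  rw [← InjOn.ncard_image (f := Prod.fst)]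
  · congr 1
    ext i
    simp only [mem_image, mem_ofPred_eq, Prod.exists, exists_and_right, exists_eq_right]
    constructor
    · rintro ⟨j, hj⟩
      exact hE.eq_iUnion ▸ mem_iUnion.mpr ⟨j, hj⟩
    · intro hi
      obtain ⟨j, hj⟩ := hE.exists_inv_mul_mem hi
      exact ⟨j, (mem_leftCoset_iff _).mpr hj⟩
  · rintro ⟨i, j⟩ hj ⟨i', j'⟩ hj' (rfl : i = i')
    exact Prod.ext rfl (hE.eq_of_mem hj hj')

theorem card_setOf_inv_mul_mem_le [Finite I] (hD : IsLeftCosetDecomposition Γ D gs)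
    (hΓD : ∀ γ ∈ Γ, ∀ x ∈ D, γ * x ∈ D) (hΓE : ∀ γ ∈ Γ, ∀ x ∈ E, γ * x ∈ E)
    {γ : G} (hγ : γ ∈ Γ) (c : G) :
    Nat.card {i | (gs i)⁻¹ * (γ * c) ∈ E} ≤ Nat.card {i | (gs i)⁻¹ * c ∈ E} := by
  choose τ hτ using fun i => hD.exists_inv_mul_mem (hΓD γ⁻¹ (Γ.inv_mem hγ) _ (hD.mem i))
  simp only [Nat.card_coe_set_eq]
  refine ncard_le_ncard_of_injOn τ (fun i hi => ?_) (fun i _ i' _ hii' => ?_)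
  · have key : (gs (τ i))⁻¹ * c = (gs (τ i))⁻¹ * (γ⁻¹ * gs i) * ((gs i)⁻¹ * (γ * c)) := by group
    show _ ∈ E
    exact key ▸ hΓE _ (hτ i) _ hi
  · have hcoset : (γ⁻¹ * gs i) • (Γ : Set G) = (γ⁻¹ * gs i') • (Γ : Set G) := by
      rw [← (leftCoset_eq_iff Γ).mpr (hτ i), ← (leftCoset_eq_iff Γ).mpr (hτ i'), hii']
    have hmem : gs i' ∈ gs i • (Γ : Set G) := by
      rw [mem_leftCoset_iff]
      simpa [mul_assoc] using (leftCoset_eq_iff Γ).mp hcoset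
    exact hD.eq_of_mem hmem (mem_own_leftCoset _ _)

theorem card_setOf_inv_mul_mem_eq [Finite I] (hD : IsLeftCosetDecomposition Γ D gs)
    (hΓD : ∀ γ ∈ Γ, ∀ x ∈ D, γ * x ∈ D) (hΓE : ∀ γ ∈ Γ, ∀ x ∈ E, γ * x ∈ E)
    {γ : G} (hγ : γ ∈ Γ) (c : G) :
    Nat.card {i | (gs i)⁻¹ * (γ * c) ∈ E} = Nat.card {i | (gs i)⁻¹ * c ∈ E} := by
  refine (hD.card_setOf_inv_mul_mem_le hΓD hΓE hγ c).antisymm ?_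
  simpa using hD.card_setOf_inv_mul_mem_le hΓD hΓE (Γ.inv_mem hγ) (γ * c)

theorem card_setOf_mul_leftCoset_eq_mul_left [Finite I] (hD : IsLeftCosetDecomposition Γ D gs)
    (hE : IsLeftCosetDecomposition Γ E hs)
    (hΓD : ∀ γ ∈ Γ, ∀ x ∈ D, γ * x ∈ D) (hΓE : ∀ γ ∈ Γ, ∀ x ∈ E, γ * x ∈ E)
    {γ : G} (hγ : γ ∈ Γ) (c : G) :
    Nat.card {p : I × J | (gs p.1 * hs p.2) • (Γ : Set G) = (γ * c) • (Γ : Set G)} =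
      Nat.card {p : I × J | (gs p.1 * hs p.2) • (Γ : Set G) = c • (Γ : Set G)} := by
  rw [hE.card_setOf_mul_leftCoset_eq, hE.card_setOf_mul_leftCoset_eq,
    hD.card_setOf_inv_mul_mem_eq hΓD hΓE hγ]

theorem exists_mul_leftCoset_eq (hD : IsLeftCosetDecomposition Γ D gs)
    (hE : IsLeftCosetDecomposition Γ E hs) (hΓE : ∀ γ ∈ Γ, ∀ x ∈ E, γ * x ∈ E)
    {d e : G} (hd : d ∈ D) (he : e ∈ E) :
    ∃ p : I × J, (gs p.1 * hs p.2) • (Γ : Set G) = (d * e) • (Γ : Set G) := by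
  obtain ⟨i, hi⟩ := hD.exists_inv_mul_mem hd
  obtain ⟨j, hj⟩ := hE.exists_inv_mul_mem (hΓE _ hi _ he)
  refine ⟨(i, j), mul_leftCoset_eq_iff.mpr ((mem_leftCoset_iff _).mpr ?_)⟩
  simpa [mul_assoc] using hj

end IsLeftCosetDecomposition

/-- Let `Γg⁻¹Γ·Γh⁻¹Γ = ⊔_{k=1}^K Γz_kΓ` be the decomposition of the product set
into double cosets, `m_k` the number of pairs `(i,j)` with `g_i h_j Γ = z_kΓ`, and
`d_k` the number of left `Γ`-cosets in `Γz_kΓ`.  Then `Σ_k m_k d_k = |I|·|J|`. -/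
theorem shimura_counting (G : Type*) [Group G] (Γ : Subgroup G) (g h : G)
    (I J : Type*) [Fintype I] [Fintype J] (gs : I → G) (hs : J → G)
    (hgcover : {x : G | ∃ a ∈ Γ, ∃ b ∈ Γ, x = a * g⁻¹ * b}
        = ⋃ i : I, gs i • (Γ : Set G))
    (hgdisj : Pairwise fun i i' : I =>
      Disjoint (gs i • (Γ : Set G)) (gs i' • (Γ : Set G)))
    (hhcover : {x : G | ∃ a ∈ Γ, ∃ b ∈ Γ, x = a * h⁻¹ * b}
        = ⋃ j : J, hs j • (Γ : Set G))
    (hhdisj : Pairwise fun j j' : J =>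
      Disjoint (hs j • (Γ : Set G)) (hs j' • (Γ : Set G)))
    (K : ℕ) (z : Fin K → G)
    (hzcover : {x : G | ∃ a ∈ Γ, ∃ b ∈ Γ, ∃ c ∈ Γ, x = a * g⁻¹ * b * h⁻¹ * c}
        = ⋃ k : Fin K, {x : G | ∃ a ∈ Γ, ∃ b ∈ Γ, x = a * z k * b})
    (hzdisj : Pairwise fun k k' : Fin K =>
      Disjoint {x : G | ∃ a ∈ Γ, ∃ b ∈ Γ, x = a * z k * b}
               {x : G | ∃ a ∈ Γ, ∃ b ∈ Γ, x = a * z k' * b}) :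
    ∑ k : Fin K,
        Nat.card {p : I × J | (gs p.1 * hs p.2) • (Γ : Set G) = z k • (Γ : Set G)}
          * Nat.card (Set.range fun γ : Γ => ((γ : G) * z k) • (Γ : Set G))
      = Fintype.card I * Fintype.card J := by
  have hD : IsLeftCosetDecomposition Γ _ gs := ⟨hgcover, hgdisj⟩
  have hE : IsLeftCosetDecomposition Γ _ hs := ⟨hhcover, hhdisj⟩
  have hΓD γ (hγ : γ ∈ Γ) x (hx : x ∈ {x : G | ∃ a ∈ Γ, ∃ b ∈ Γ, x = a * g⁻¹ * b}) :=
    mul_mem_doubleCoset hγ hx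
  have hΓE γ (hγ : γ ∈ Γ) x (hx : x ∈ {x : G | ∃ a ∈ Γ, ∃ b ∈ Γ, x = a * h⁻¹ * b}) :=
    mul_mem_doubleCoset hγ hx
  rw [← Nat.card_eq_fintype_card, ← Nat.card_eq_fintype_card, ← Nat.card_prod]
  apply Nat.sum_card_fiber_mul_card_eq_card (α := I × J)
    (fun p => (gs p.1 * hs p.2) • (Γ : Set G))
  · intro k k' hkk'
    refine disjoint_left.mpr ?_
    rintro _ ⟨γ, rfl⟩ hk'
    exact disjoint_left.mp (hzdisj hkk') (leftCoset_mem_range_iff.mp ⟨γ, rfl⟩)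
      (leftCoset_mem_range_iff.mp hk')
  · rintro _ ⟨⟨i, j⟩, rfl⟩
    have hmem : gs i * hs j ∈ ⋃ k, {x : G | ∃ a ∈ Γ, ∃ b ∈ Γ, x = a * z k * b} :=
      hzcover ▸ mul_mem_doubleCoset_mul_doubleCoset (hD.mem i) (hE.mem j)
    obtain ⟨k, hk⟩ := mem_iUnion.mp hmem
    exact mem_iUnion.mpr ⟨k, leftCoset_mem_range_iff.mpr hk⟩
  · rintro k _ ⟨γ, rfl⟩
    obtain ⟨a, ha, b, hb, c, hc, habc⟩ : (γ : G) * z k ∈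
        {x : G | ∃ a ∈ Γ, ∃ b ∈ Γ, ∃ c ∈ Γ, x = a * g⁻¹ * b * h⁻¹ * c} :=
      hzcover ▸ mem_iUnion.mpr ⟨k, γ, γ.2, 1, Γ.one_mem, by group⟩
    show ((γ : G) * z k) • (Γ : Set G) ∈ _
    rw [habc, mul_assoc _ h⁻¹]
    exact hD.exists_mul_leftCoset_eq hE hΓE ⟨a, ha, b, hb, rfl⟩ ⟨1, Γ.one_mem, c, hc, by group⟩
  · rintro k _ ⟨γ, rfl⟩
    exact hD.card_setOf_mul_leftCoset_eq_mul_left hE hΓD hΓE γ.2 (z k)
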